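/- The PBW star product and the symmetrizer star product on Pol(𝔤*) are gauge equivalent: the map T = Sym⁻¹ ∘ ψ_PBW (composition of the PBW isomorphism with the inverse of the symmetrizer isomorphism) is a ℂ[[h]]-module automorphism of Pol(𝔤*)[[h]] equal to the identity mod h, intertwining the two star products. -/

import Mathlib

open MvPolynomial

noncomputable section

abbrev Rh := PowerSeries ℂ

/-- The relation generating the ideal L_h ⊂ T_{ℂ[[h]]}(𝔤):
X_i ⊗ X_j − X_j ⊗ X_i − h[X_i, X_j], written in a basis with structure constants c. -/
def uhRel {n : ℕ} (c : Fin n → Fin n → Fin n → ℂ) :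
    FreeAlgebra Rh (Fin n) → FreeAlgebra Rh (Fin n) → Prop :=
  fun a b => ∃ i j : Fin n,
    a = FreeAlgebra.ι Rh i * FreeAlgebra.ι Rh j ∧
    b = FreeAlgebra.ι Rh j * FreeAlgebra.ι Rh i
        + ∑ k, (PowerSeries.X * PowerSeries.C (c i j k)) • FreeAlgebra.ι Rh k

/-- U_h = T_{ℂ[[h]]}(𝔤)/L_h. -/
def Uh {n : ℕ} (c : Fin n → Fin n → Fin n → ℂ) := RingQuot (uhRel c)

instance {n : ℕ} (c : Fin n → Fin n → Fin n → ℂ) : Ring (Uh c) := by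
  unfold Uh; infer_instance

instance {n : ℕ} (c : Fin n → Fin n → Fin n → ℂ) : Algebra Rh (Uh c) := by
  unfold Uh; infer_instance

/-- The generator X_i of U_h. -/
def uhGen {n : ℕ} (c : Fin n → Fin n → Fin n → ℂ) (i : Fin n) : Uh c :=
  RingQuot.mkAlgHom Rh (uhRel c) (FreeAlgebra.ι Rh i)

/-- The ordered (PBW) monomial X₁^{d₁} ⋯ Xₙ^{dₙ} in U_h. -/
def pbwMonomial {n : ℕ} (c : Fin n → Fin n → Fin n → ℂ) (d : Fin n →₀ ℕ) : Uh c :=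
  ((List.finRange n).map fun i => uhGen c i ^ d i).prod

/-- The PBW linear isomorphism candidate Pol(𝔤*)[[h]] → U_h (with Pol(𝔤*)[[h]]
modelled by polynomials with coefficients in ℂ[[h]]), sending an ordered monomial to
the corresponding ordered product of generators. -/
def pbwMap {n : ℕ} (c : Fin n → Fin n → Fin n → ℂ)
    (f : MvPolynomial (Fin n) Rh) : Uh c :=
  ∑ d ∈ f.support, f.coeff d • pbwMonomial c d

/-- Reduction mod h: specializing the coefficients at h = 0. -/
def epsh {n : ℕ} (f : MvPolynomial (Fin n) Rh) : MvPolynomial (Fin n) ℂ :=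
  MvPolynomial.map (PowerSeries.constantCoeff (R := ℂ)) f

/-- The coefficient of h¹. -/
def coeffOneh {n : ℕ} (f : MvPolynomial (Fin n) Rh) : MvPolynomial (Fin n) ℂ :=
  ∑ d ∈ f.support, MvPolynomial.monomial d (PowerSeries.coeff (R := ℂ) 1 (f.coeff d))

/-- The Lie–Poisson bracket on Pol(𝔤*) in coordinates. -/
def polPB {n : ℕ} (c : Fin n → Fin n → Fin n → ℂ)
    (p q : MvPolynomial (Fin n) ℂ) : MvPolynomial (Fin n) ℂ :=
  ∑ i, ∑ j, ∑ k, MvPolynomial.C (c i j k) * X k * pderiv i p * pderiv j q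

end

noncomputable section

def uhSymMonomial {n : ℕ} (c : Fin n → Fin n → Fin n → ℂ) (d : Fin n →₀ ℕ) : Uh c :=
  let lst := (Finsupp.toMultiset d).sort (· ≤ ·)
  PowerSeries.C ((lst.length.factorial : ℂ))⁻¹ •
    ∑ σ : Equiv.Perm (Fin lst.length),
      (List.ofFn fun t : Fin lst.length => uhGen c (lst.get (σ t))).prod

/-- The symmetrizer ℂ[[h]]-module map Sym : Pol(𝔤*)[[h]] → U_h. -/
def uhSymR {n : ℕ} (c : Fin n → Fin n → Fin n → ℂ) (f : MvPolynomial (Fin n) Rh) :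
    Uh c :=
  ∑ d ∈ f.support, f.coeff d • uhSymMonomial c d

end

/-
Sym and ψ_PBW are the `ℂ[[h]]`-linear extensions of their values on the monomial basis, so
`T = Sym⁻¹ ∘ ψ_PBW` is linear; bijectivity and the intertwining property are formal. For
`T ≡ id mod h`, note that at `h = 0` the defining relations of `U_h` say that the generators
commute, so `X_i ↦ x_i` defines an algebra map `U_h → Pol(𝔤*)` over `h ↦ 0`. It sends an
ordered monomial and its symmetrization to the same commutative monomial, so both ψ_PBW and Sym
become reduction mod `h` after applying it, and `Sym (T f) = ψ_PBW f` gives `T f ≡ f mod h`.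
-/

theorem MvPolynomial.sum_support_coeff_smul_eq_constr {R σ M : Type*} [CommSemiring R]
    [AddCommMonoid M] [Module R M] (m : (σ →₀ ℕ) → M) (f : MvPolynomial σ R) :
    ∑ d ∈ f.support, f.coeff d • m d = (basisMonomials σ R).constr R m f := by
  rw [Module.Basis.constr_apply]
  rfl

theorem MvPolynomial.prod_map_X_toMultiset {σ R : Type*} [CommSemiring R] (d : σ →₀ ℕ) :
    (d.toMultiset.map (X : σ → MvPolynomial σ R)).prod = monomial d 1 := by
  induction d using Finsupp.induction with
  | zero => simp
  | single_add i k d _ _ ih =>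
    rw [Finsupp.toMultiset_add, Multiset.map_add, Multiset.prod_add, ih,
      Finsupp.toMultiset_single, Multiset.map_nsmul, Multiset.prod_nsmul, Multiset.map_singleton,
      Multiset.prod_singleton, X_pow_eq_monomial, monomial_mul, one_mul]

theorem pbwMap_eq_constr {n : ℕ} (c : Fin n → Fin n → Fin n → ℂ) :
    pbwMap c = (basisMonomials (Fin n) Rh).constr Rh (pbwMonomial c) :=
  funext (sum_support_coeff_smul_eq_constr _)

theorem uhSymR_eq_constr {n : ℕ} (c : Fin n → Fin n → Fin n → ℂ) :
    uhSymR c = (basisMonomials (Fin n) Rh).constr Rh (uhSymMonomial c) :=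
  funext (sum_support_coeff_smul_eq_constr _)

section ReductionModH

/-- `ℂ[[h]]` acting on `Pol(𝔤*)` through `h ↦ 0`. -/
noncomputable abbrev constantCoeffAlgebra {σ : Type*} : Algebra Rh (MvPolynomial σ ℂ) :=
  (C.comp PowerSeries.constantCoeff).toAlgebra

attribute [local instance] constantCoeffAlgebra

theorem constantCoeffAlgebra_smul_def {σ : Type*} (r : Rh) (p : MvPolynomial σ ℂ) :
    r • p = C (PowerSeries.constantCoeff r) * p :=
  Algebra.smul_def r p

variable {n : ℕ}

noncomputable def epshLinear : MvPolynomial (Fin n) Rh →ₗ[Rh] MvPolynomial (Fin n) ℂ where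
  toFun := epsh
  map_add' := map_add _
  map_smul' r f := by
    simp [epsh, constantCoeffAlgebra_smul_def, smul_eq_C_mul, map_mul]

theorem comp_constr_eq_epshLinear {M : Type*} [AddCommMonoid M] [Module Rh M]
    (φ : M →ₗ[Rh] MvPolynomial (Fin n) ℂ) (m : (Fin n →₀ ℕ) → M)
    (hm : ∀ d, φ (m d) = monomial d 1) :
    φ ∘ₗ (basisMonomials (Fin n) Rh).constr Rh m = epshLinear :=
  (basisMonomials (Fin n) Rh).ext fun d => by
    rw [LinearMap.comp_apply, Module.Basis.constr_basis, hm]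
    change _ = epsh _
    simp [epsh]

variable (c : Fin n → Fin n → Fin n → ℂ)

theorem freeAlgebraLift_X_eq_of_uhRel ⦃a b : FreeAlgebra Rh (Fin n)⦄ (h : uhRel c a b) :
    FreeAlgebra.lift Rh (X (R := ℂ)) a = FreeAlgebra.lift Rh (X (R := ℂ)) b := by
  obtain ⟨i, j, rfl, rfl⟩ := h
  simp [constantCoeffAlgebra_smul_def, mul_comm]

noncomputable def uhReduction : Uh c →ₐ[Rh] MvPolynomial (Fin n) ℂ :=
  RingQuot.liftAlgHom Rh ⟨FreeAlgebra.lift Rh X, freeAlgebraLift_X_eq_of_uhRel c⟩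

theorem uhReduction_uhGen (i : Fin n) : uhReduction c (uhGen c i) = X i :=
  (RingQuot.liftAlgHom_mkAlgHom_apply Rh _ (freeAlgebraLift_X_eq_of_uhRel c) _).trans
    (FreeAlgebra.lift_ι_apply _ _)

theorem uhReduction_pbwMonomial (d : Fin n →₀ ℕ) :
    uhReduction c (pbwMonomial c d) = monomial d 1 := by
  simp [pbwMonomial, map_list_prod, Function.comp_def, uhReduction_uhGen, monomial_eq,
    Finsupp.prod_pow, Fin.prod_univ_def]

theorem uhReduction_uhSymMonomial (d : Fin n →₀ ℕ) :
    uhReduction c (uhSymMonomial c d) = monomial d 1 := by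
  set l := (Finsupp.toMultiset d).sort (· ≤ ·) with hl
  have hword (σ : Equiv.Perm (Fin l.length)) :
      uhReduction c (List.ofFn fun t => uhGen c (l.get (σ t))).prod = monomial d 1 := by
    rw [map_list_prod, List.map_ofFn, List.prod_ofFn]
    simp only [Function.comp_apply, uhReduction_uhGen]
    rw [Equiv.prod_comp σ (fun t => X (l.get t))]
    simp only [List.get_eq_getElem, Fin.prod_univ_fun_getElem]
    rw [← Multiset.prod_coe, ← Multiset.map_coe, hl, Multiset.sort_eq, prod_map_X_toMultiset]
  rw [uhSymMonomial, ← hl, map_smul, map_sum, Finset.sum_congr rfl fun σ _ => hword σ,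
    Finset.sum_const, Finset.card_univ, Fintype.card_perm, Fintype.card_fin,
    constantCoeffAlgebra_smul_def, PowerSeries.constantCoeff_C, nsmul_eq_mul, ← mul_assoc,
    ← map_natCast C, ← C_mul,
    inv_mul_cancel₀ (Nat.cast_ne_zero.mpr l.length.factorial_ne_zero), C_1, one_mul]

theorem uhReduction_pbwMap (f : MvPolynomial (Fin n) Rh) :
    uhReduction c (pbwMap c f) = epsh f := by
  rw [pbwMap_eq_constr]
  exact LinearMap.congr_fun
    (comp_constr_eq_epshLinear (uhReduction c).toLinearMap _ (uhReduction_pbwMonomial c)) f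

theorem uhReduction_uhSymR (f : MvPolynomial (Fin n) Rh) :
    uhReduction c (uhSymR c f) = epsh f := by
  rw [uhSymR_eq_constr]
  exact LinearMap.congr_fun
    (comp_constr_eq_epshLinear (uhReduction c).toLinearMap _ (uhReduction_uhSymMonomial c)) f

end ReductionModH

theorem pbw_sym_gauge_equivalent_general {n : ℕ}
    (c : Fin n → Fin n → Fin n → ℂ)
    (hpbw : Function.Bijective (pbwMap c))
    (hsym : Function.Bijective (uhSymR c)) :
    let T : MvPolynomial (Fin n) Rh → MvPolynomial (Fin n) Rh :=
      fun f => (Equiv.ofBijective (uhSymR c) hsym).symm (pbwMap c f)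
    Function.Bijective T ∧
    (∀ (r : Rh) (f g : MvPolynomial (Fin n) Rh), T (r • f + g) = r • T f + T g) ∧
    (∀ f, epsh (T f) = epsh f) ∧
    (∀ f₁ f₂ : MvPolynomial (Fin n) Rh,
      T ((Equiv.ofBijective (pbwMap c) hpbw).symm (pbwMap c f₁ * pbwMap c f₂))
        = (Equiv.ofBijective (uhSymR c) hsym).symm
            (uhSymR c (T f₁) * uhSymR c (T f₂))) := by
  intro T
  have hT (f : MvPolynomial (Fin n) Rh) : uhSymR c (T f) = pbwMap c f :=
    (Equiv.ofBijective _ hsym).apply_symm_apply _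
  refine ⟨(Equiv.ofBijective _ hsym).symm.bijective.comp hpbw, fun r f g => hsym.injective ?_,
    fun f => ?_, fun f₁ f₂ => ?_⟩
  · rw [hT, uhSymR_eq_constr, map_add, map_smul, ← uhSymR_eq_constr, hT, hT, pbwMap_eq_constr,
      map_add, map_smul]
  · rw [← uhReduction_uhSymR c, hT, uhReduction_pbwMap]
  · simp only [T, Equiv.ofBijective_apply_symm_apply]

/-- the PBW star product and the symmetrizer star product are gauge
equivalent: T = Sym⁻¹ ∘ ψ_PBW is a ℂ[[h]]-linear bijection of Pol(𝔤*)[[h]], equal to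
the identity mod h, and it intertwines the star product induced by ψ_PBW with the one
induced by Sym (both maps being bijective, by the PBW theorem, which we assume). -/
theorem pbw_sym_gauge_equivalent {L : Type*} [LieRing L] [LieAlgebra ℂ L]
    [Module.Finite ℂ L] {n : ℕ} (b : Module.Basis (Fin n) ℂ L)
    (c : Fin n → Fin n → Fin n → ℂ)
    (hc : ∀ i j, ⁅b i, b j⁆ = ∑ k, c i j k • b k)
    (hpbw : Function.Bijective (pbwMap c))
    (hsym : Function.Bijective (uhSymR c)) :
    let T : MvPolynomial (Fin n) Rh → MvPolynomial (Fin n) Rh :=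
      fun f => (Equiv.ofBijective (uhSymR c) hsym).symm (pbwMap c f)
    Function.Bijective T ∧
    (∀ (r : Rh) (f g : MvPolynomial (Fin n) Rh), T (r • f + g) = r • T f + T g) ∧
    (∀ f, epsh (T f) = epsh f) ∧
    (∀ f₁ f₂ : MvPolynomial (Fin n) Rh,
      T ((Equiv.ofBijective (pbwMap c) hpbw).symm (pbwMap c f₁ * pbwMap c f₂))
        = (Equiv.ofBijective (uhSymR c) hsym).symm
            (uhSymR c (T f₁) * uhSymR c (T f₂))) :=
  pbw_sym_gauge_equivalent_general c hpbw hsym
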